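/- Let (X, d, μ) be a metric measure space and B_R(x̄) a ball such that μ(B_r(x)) = ω·r^Q for all x and r (for some constants ω > 0, Q > 0), and such that there exists c_d > 0 with μ(B_R(x̄) ∩ B_r(x)) ≥ c_d·μ(B_r(x)) for all r > 0 and all x ∈ B_R(x̄). Let 0 < ε < 1 and suppose C ⊂ D ⊂ B_R(x̄) are measurable sets with μ(C) < ε·μ(B_R(x̄)), and with the property: for every x ∈ B_R(x̄) and every r ≤ 2R, if μ(C ∩ B_r(x)) ≥ ε·μ(B_r(x)) then B_r(x) ∩ B_R(x̄) ⊂ D. Then μ(C) ≤ ε·(5^Q/c_d)·μ(D). -/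

import Mathlib

/-!
Almost every point `x` of `C` is a Lebesgue density point, so it admits radii `s ≤ 2R` with
`μ (C ∩ B(x, s)) ≥ ε μ (B(x, s))`; pick one, `r x`, above `4/5` of their supremum. By hypothesis
`B(x, r x) ∩ B_R(x̄) ⊆ D`. Vitali's lemma (enlargement factor 4) yields countably many disjoint
such balls whose enlargements cover almost all of `C`. As `5 r x` is not an admissible radius
(or exceeds `R`, where `μ C < ε μ (B_R(x̄))` takes over),
`μ (C ∩ B̄(x, 4 r x)) ≤ ε μ (B(x, 5 r x)) = ε 5^Q μ (B(x, r x))`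
`≤ ε 5^Q / c_d · μ (B(x, r x) ∩ B_R(x̄))`,
and summing over the disjoint balls gives the bound.
-/

open MeasureTheory Metric ENNReal Filter Set Topology TopologicalSpace

theorem exists_separated_seq_of_not_totallyBounded {X : Type*} [PseudoMetricSpace X] {s : Set X}
    (hs : ¬TotallyBounded s) :
    ∃ δ > 0, ∃ u : ℕ → X, (∀ n, u n ∈ s) ∧ Pairwise fun m n => δ ≤ dist (u m) (u n) := by
  simp only [Metric.totallyBounded_iff, not_forall, not_exists, not_and] at hs
  obtain ⟨δ, hδ, hcover⟩ := hs
  obtain ⟨u, hu⟩ := seq_of_forall_finite_exists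
    (P := fun c t => c ∈ s ∧ ∀ y ∈ t, δ ≤ dist c y) fun t ht => by
      obtain ⟨c, hcs, hct⟩ := not_subset.1 (hcover t ht)
      simp only [mem_iUnion₂, mem_ball, not_exists, not_lt] at hct
      exact ⟨c, hcs, hct⟩
  refine ⟨δ, hδ, u, fun n => (hu n).1, fun m n hmn => ?_⟩
  rcases hmn.lt_or_gt with h | h
  · exact dist_comm (u n) (u m) ▸ (hu n).2 _ (mem_image_of_mem u h)
  · exact (hu m).2 _ (mem_image_of_mem u h)

theorem exists_mem_forall_lt_mul {S : Set ℝ} (hne : S.Nonempty) (hbdd : BddAbove S)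
    (hpos : S ⊆ Ioi 0) {c : ℝ} (hc : 1 < c) : ∃ r ∈ S, ∀ s ∈ S, s < c * r := by
  have hsup : 0 < sSup S := hne.elim fun s hs => (hpos hs).trans_le (le_csSup hbdd hs)
  obtain ⟨r, hrS, hr⟩ := exists_lt_of_lt_csSup hne (div_lt_self hsup hc)
  exact ⟨r, hrS, fun s hs => (le_csSup hbdd hs).trans_lt ((div_lt_iff₀' (by linarith)).1 hr)⟩

theorem exists_countable_disjoint_balls_covering {X : Type*} [PseudoMetricSpace X]
    [SeparableSpace X] (t : Set X) (r : X → ℝ) {K : ℝ} (hr : ∀ x ∈ t, r x ∈ Ioc 0 K) :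
    ∃ u ⊆ t, u.Countable ∧ u.PairwiseDisjoint (fun x => ball x (r x)) ∧
      t ⊆ ⋃ x ∈ u, closedBall x (4 * r x) := by
  obtain ⟨u, hut, hdisj, hcover⟩ := Vitali.exists_disjoint_subfamily_covering_enlargement_closedBall
    t (fun x => x) r K (fun x hx => (hr x hx).2) 4 (by norm_num)
  have hdisj' : u.PairwiseDisjoint fun x => ball x (r x) :=
    hdisj.mono fun _ => ball_subset_closedBall
  refine ⟨u, hut, hdisj'.countable_of_isOpen (fun _ _ => isOpen_ball)
    fun x hx => nonempty_ball.2 (hr x (hut hx)).1, hdisj', fun x hx => ?_⟩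
  obtain ⟨y, hyu, hxy⟩ := hcover x hx
  exact mem_biUnion hyu (hxy (mem_closedBall_self (hr x hx).1.le))

theorem measure_diff_setOf_eq_zero_of_ae_restrict {α : Type*} [MeasurableSpace α] {μ : Measure α}
    {s : Set α} {p : α → Prop} (h : ∀ᵐ x ∂μ.restrict s, p x) : μ (s \ {x | p x}) = 0 := by
  refine measure_mono_null ?_ (nonpos_iff_eq_zero.1 ((Measure.le_restrict_apply _ _).trans_eq h))
  exact fun x hx => ⟨hx.2, hx.1⟩

theorem measure_le_mul_of_ae_subset_biUnion {α ι : Type*} [MeasurableSpace α] {μ : Measure α}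
    {u : Set ι} (hu : u.Countable) {C D : Set α} {E F : ι → Set α} {K : ℝ≥0∞}
    (hC : C ≤ᵐ[μ] ⋃ i ∈ u, F i) (hF : ∀ i ∈ u, μ (F i) ≤ K * μ (E i))
    (hdisj : u.PairwiseDisjoint E) (hE : ∀ i ∈ u, MeasurableSet (E i)) (hD : ⋃ i ∈ u, E i ⊆ D) :
    μ C ≤ K * μ D :=
  calc μ C ≤ μ (⋃ i ∈ u, F i) := measure_mono_ae hC
    _ ≤ ∑' i : u, μ (F i) := measure_biUnion_le μ hu F
    _ ≤ ∑' i : u, K * μ (E i) := ENNReal.tsum_le_tsum fun i => hF i i.2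
    _ = K * μ (⋃ i ∈ u, E i) := by rw [ENNReal.tsum_mul_left, measure_biUnion hu hdisj hE]
    _ ≤ K * μ D := mul_le_mul_right (measure_mono hD) K

-- Balls have exactly, not merely up to constants, the measure `ω r ^ Q`.
def IsAhlforsRegular {X : Type*} [PseudoMetricSpace X] [MeasurableSpace X] (μ : Measure X)
    (ω Q : ℝ) : Prop :=
  ∀ (x : X) (r : ℝ), 0 < r → μ (ball x r) = ENNReal.ofReal (ω * r ^ Q)

def densityRadii {X : Type*} [PseudoMetricSpace X] [MeasurableSpace X] (μ : Measure X)
    (a : ℝ≥0∞) (C : Set X) (x : X) (T : ℝ) : Set ℝ :=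
  {s ∈ Ioc 0 T | a * μ (ball x s) ≤ μ (C ∩ ball x s)}

namespace IsAhlforsRegular

variable {X : Type*} [PseudoMetricSpace X] [MeasurableSpace X] {μ : Measure X} {ω Q : ℝ}

theorem measure_ball_lt_top (h : IsAhlforsRegular μ ω Q) (x : X) (r : ℝ) : μ (ball x r) < ∞ := by
  rcases le_or_gt r 0 with hr | hr
  · simp [ball_eq_empty.2 hr]
  · simp [h x r hr]

theorem measure_ball_mul (h : IsAhlforsRegular μ ω Q) (x : X) {c r : ℝ} (hc : 0 < c)
    (hr : 0 < r) : μ (ball x (c * r)) = ENNReal.ofReal (c ^ Q) * μ (ball x r) := by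
  rw [h x _ (mul_pos hc hr), h x r hr, ← ENNReal.ofReal_mul (by positivity),
    Real.mul_rpow hc.le hr.le]
  ring_nf

theorem measure_ball_le_measure_ball (h : IsAhlforsRegular μ ω Q) (hω : 0 ≤ ω) (hQ : 0 ≤ Q)
    (x y : X) {r s : ℝ} (hrs : r ≤ s) : μ (ball x r) ≤ μ (ball y s) := by
  rcases le_or_gt r 0 with hr | hr
  · simp [ball_eq_empty.2 hr]
  rw [h x r hr, h y s (hr.trans_le hrs)]
  gcongr

theorem measure_closedBall (h : IsAhlforsRegular μ ω Q) (x : X) {r : ℝ} (hr : 0 < r) :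
    μ (closedBall x r) = ENNReal.ofReal (ω * r ^ Q) := by
  refine le_antisymm ?_ (h x r hr ▸ measure_mono ball_subset_closedBall)
  have hcont : ContinuousAt (fun s : ℝ => ENNReal.ofReal (ω * s ^ Q)) r :=
    ENNReal.continuous_ofReal.continuousAt.comp
      (continuousAt_const.mul (Real.continuousAt_rpow_const r Q (Or.inl hr.ne')))
  refine ge_of_tendsto (hcont.tendsto.mono_left (nhdsWithin_le_nhds (s := Ioi r))) ?_
  filter_upwards [self_mem_nhdsWithin] with s (hs : r < s)
  rw [← h x s (hr.trans hs)]
  exact measure_mono (closedBall_subset_ball hs)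

theorem ball_ae_eq_closedBall [OpensMeasurableSpace X] (h : IsAhlforsRegular μ ω Q) (x : X)
    {r : ℝ} (hr : 0 < r) : ball x r =ᵐ[μ] closedBall x r :=
  ae_eq_of_subset_of_measure_ge ball_subset_closedBall
    (by rw [h.measure_closedBall x hr, h x r hr]) measurableSet_ball.nullMeasurableSet
    (by rw [h.measure_closedBall x hr]; exact ofReal_ne_top)

theorem totallyBounded_ball [OpensMeasurableSpace X] (h : IsAhlforsRegular μ ω Q) (hω : 0 < ω)
    (x₀ : X) (r : ℝ) : TotallyBounded (ball x₀ r) := by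
  by_contra hnot
  obtain ⟨δ, hδ, u, hu, hsep⟩ := exists_separated_seq_of_not_totallyBounded hnot
  have hdisj : Pairwise (Function.onFun Disjoint fun n => ball (u n) (δ / 2)) := fun m n hmn =>
    ball_disjoint_ball (by linarith [hsep hmn])
  have hsub : ⋃ n, ball (u n) (δ / 2) ⊆ ball x₀ (r + δ) := iUnion_subset fun n =>
    ball_subset_ball' (by linarith [mem_ball.1 (hu n)])
  have hinf : μ (⋃ n, ball (u n) (δ / 2)) = ∞ := by
    rw [measure_iUnion hdisj fun _ => measurableSet_ball]
    simp only [h _ _ (half_pos hδ)]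
    exact ENNReal.tsum_const_eq_top_of_ne_zero (ENNReal.ofReal_pos.2 (by positivity)).ne'
  exact (h.measure_ball_lt_top x₀ (r + δ)).ne (top_unique (hinf ▸ measure_mono hsub))

theorem secondCountableTopology [OpensMeasurableSpace X] [Nonempty X]
    (h : IsAhlforsRegular μ ω Q) (hω : 0 < ω) : SecondCountableTopology X := by
  obtain ⟨x₀⟩ := ‹Nonempty X›
  have : SeparableSpace X := isSeparable_univ_iff.1 <| iUnion_ball_nat x₀ ▸
    isSeparable_iUnion.2 fun n => (h.totallyBounded_ball hω x₀ n).isSeparable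
  exact UniformSpace.secondCountable_of_separable X

theorem isLocallyFiniteMeasure (h : IsAhlforsRegular μ ω Q) : IsLocallyFiniteMeasure μ :=
  ⟨fun x => ⟨ball x 1, ball_mem_nhds x one_pos, h.measure_ball_lt_top x 1⟩⟩

theorem isUnifLocDoublingMeasure (h : IsAhlforsRegular μ ω Q) : IsUnifLocDoublingMeasure μ := by
  refine ⟨⟨(2 ^ Q : ℝ).toNNReal, eventually_mem_nhdsWithin.mono fun r (hr : 0 < r) x => ?_⟩⟩
  rw [h.measure_closedBall x (by positivity), h.measure_closedBall x hr,
    Real.mul_rpow zero_le_two hr.le,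
    mul_left_comm, ENNReal.ofReal_mul (by positivity)]
  rfl

theorem ae_tendsto_measure_inter_closedBall_div [BorelSpace X] [Nonempty X]
    (h : IsAhlforsRegular μ ω Q) (hω : 0 < ω) (C : Set X) :
    ∀ᵐ x ∂μ.restrict C,
      Tendsto (fun r => μ (C ∩ closedBall x r) / μ (closedBall x r)) (𝓝[>] 0) (𝓝 1) := by
  have := h.secondCountableTopology hω
  have := h.isLocallyFiniteMeasure
  have := h.isUnifLocDoublingMeasure
  filter_upwards [IsUnifLocDoublingMeasure.ae_tendsto_measure_inter_div μ C 1] with x hx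
  exact hx (fun _ => x) id tendsto_id
    (eventually_mem_nhdsWithin.mono fun r hr => by simpa using (le_of_lt hr : 0 ≤ r))

theorem densityRadii_nonempty [OpensMeasurableSpace X] (h : IsAhlforsRegular μ ω Q)
    {C : Set X} {x : X} {a : ℝ≥0∞} {T : ℝ}
    (hx : Tendsto (fun r => μ (C ∩ closedBall x r) / μ (closedBall x r)) (𝓝[>] 0) (𝓝 1))
    (ha : a < 1) (hT : 0 < T) : (densityRadii μ a C x T).Nonempty := by
  obtain ⟨r, hr, hrT⟩ := ((hx.eventually (lt_mem_nhds ha)).and (Ioc_mem_nhdsGT hT)).exists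
  have hball := h.ball_ae_eq_closedBall x hrT.1
  refine ⟨r, hrT, ?_⟩
  rw [measure_congr hball, measure_congr ((ae_eq_refl C).inter hball)]
  exact mul_le_of_le_div hr.le

theorem measure_inter_closedBall_le (h : IsAhlforsRegular μ ω Q) (hω : 0 ≤ ω) (hQ : 0 ≤ Q)
    {C : Set X} {a : ℝ≥0∞} {xbar x : X} {R r : ℝ} (hC : μ C ≤ a * μ (ball xbar R))
    (hr : r ∈ densityRadii μ a C x (2 * R))
    (hmax : ∀ s ∈ densityRadii μ a C x (2 * R), s < 5 / 4 * r) :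
    μ (C ∩ closedBall x (4 * r)) ≤ a * ENNReal.ofReal (5 ^ Q) * μ (ball x r) := by
  have hr0 : 0 < r := hr.1.1
  rw [mul_assoc, ← h.measure_ball_mul x (by norm_num) hr0]
  by_cases h5 : 5 * r ≤ 2 * R
  · have hnot : 5 * r ∉ densityRadii μ a C x (2 * R) := fun hmem => by linarith [hmax _ hmem]
    calc μ (C ∩ closedBall x (4 * r)) ≤ μ (C ∩ ball x (5 * r)) :=
          measure_mono (inter_subset_inter_right _ (closedBall_subset_ball (by linarith)))
      _ ≤ a * μ (ball x (5 * r)) := (not_le.1 fun hle => hnot ⟨⟨by positivity, h5⟩, hle⟩).le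
  · calc μ (C ∩ closedBall x (4 * r)) ≤ μ C := measure_mono inter_subset_left
      _ ≤ a * μ (ball xbar R) := hC
      _ ≤ a * μ (ball x (5 * r)) :=
          mul_le_mul_right (h.measure_ball_le_measure_ball hω hQ _ _ (by linarith)) a

theorem measure_inter_closedBall_le_div (h : IsAhlforsRegular μ ω Q) (hω : 0 ≤ ω) (hQ : 0 ≤ Q)
    {C : Set X} {ε c : ℝ} (hc : 0 < c) {xbar x : X} {R r : ℝ}
    (hC : μ C ≤ ENNReal.ofReal ε * μ (ball xbar R))
    (hreg : ENNReal.ofReal c * μ (ball x r) ≤ μ (ball xbar R ∩ ball x r))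
    (hr : r ∈ densityRadii μ (ENNReal.ofReal ε) C x (2 * R))
    (hmax : ∀ s ∈ densityRadii μ (ENNReal.ofReal ε) C x (2 * R), s < 5 / 4 * r) :
    μ (C ∩ closedBall x (4 * r)) ≤ ENNReal.ofReal (ε * 5 ^ Q / c) * μ (ball xbar R ∩ ball x r) := by
  have hball : μ (ball x r) ≤ μ (ball xbar R ∩ ball x r) / ENNReal.ofReal c :=
    (ENNReal.le_div_iff_mul_le (.inl (ofReal_pos.2 hc).ne') (.inl ofReal_ne_top)).2 <|
      mul_comm (μ _) _ ▸ hreg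
  calc μ (C ∩ closedBall x (4 * r))
      ≤ ENNReal.ofReal ε * ENNReal.ofReal (5 ^ Q) * μ (ball x r) :=
        h.measure_inter_closedBall_le hω hQ hC hr hmax
    _ ≤ ENNReal.ofReal ε * ENNReal.ofReal (5 ^ Q) *
          (μ (ball xbar R ∩ ball x r) / ENNReal.ofReal c) := by
        gcongr
    _ = ENNReal.ofReal (ε * 5 ^ Q / c) * μ (ball xbar R ∩ ball x r) := by
        rw [ofReal_div_of_pos hc, ofReal_mul' (by positivity)]
        simp only [div_eq_mul_inv]
        ring

end IsAhlforsRegular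

theorem ink_spots_general {X : Type*} [MetricSpace X] [MeasurableSpace X] [BorelSpace X]
    (μ : Measure X) (ω Q : ℝ) (hω : 0 < ω) (hQ : 0 < Q)
    (hAhlfors : ∀ (x : X) (r : ℝ), 0 < r →
      μ (ball x r) = ENNReal.ofReal (ω * r ^ Q))
    (xbar : X) (R : ℝ) (hRpos : 0 < R) (c_d : ℝ) (hcd : 0 < c_d)
    (hreg : ∀ (x : X), x ∈ ball xbar R → ∀ r : ℝ, 0 < r →
      ENNReal.ofReal c_d * μ (ball x r) ≤ μ (ball xbar R ∩ ball x r))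
    (ε : ℝ) (hε1 : ε < 1)
    (C D : Set X)
    (hCD : C ⊆ D) (hDB : D ⊆ ball xbar R)
    (hCsmall : μ C < ENNReal.ofReal ε * μ (ball xbar R))
    (hprop : ∀ x ∈ ball xbar R, ∀ r : ℝ, 0 < r → r ≤ 2 * R →
      ENNReal.ofReal ε * μ (ball x r) ≤ μ (C ∩ ball x r) →
      ball x r ∩ ball xbar R ⊆ D) :
    μ C ≤ ENNReal.ofReal (ε * 5 ^ Q / c_d) * μ D := by
  have hA : IsAhlforsRegular μ ω Q := hAhlfors
  have : Nonempty X := ⟨xbar⟩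
  have := hA.secondCountableTopology hω
  have hCG :=
    measure_diff_setOf_eq_zero_of_ae_restrict (hA.ae_tendsto_measure_inter_closedBall_div hω C)
  set G := {x | Tendsto (fun r => μ (C ∩ closedBall x r) / μ (closedBall x r)) (𝓝[>] 0) (𝓝 1)}
  have hrad : ∀ x ∈ C ∩ G, ∃ r ∈ densityRadii μ (ENNReal.ofReal ε) C x (2 * R),
      ∀ s ∈ densityRadii μ (ENNReal.ofReal ε) C x (2 * R), s < 5 / 4 * r := fun x hx =>
    exists_mem_forall_lt_mul (hA.densityRadii_nonempty hx.2 (ofReal_lt_one.2 hε1) (by positivity))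
      ⟨2 * R, fun s hs => hs.1.2⟩ (fun s hs => hs.1.1) (by norm_num)
  choose! rad hrad hmax using hrad
  obtain ⟨u, hu, hucount, hudisj, hcover⟩ :=
    exists_countable_disjoint_balls_covering (C ∩ G) rad fun x hx => (hrad x hx).1
  have hcenter : ∀ x ∈ u, x ∈ ball xbar R := fun x hx => hDB (hCD (hu hx).1)
  refine measure_le_mul_of_ae_subset_biUnion hucount (F := fun x => C ∩ closedBall x (4 * rad x))
    ?_ (fun x hx => hA.measure_inter_closedBall_le_div hω.le hQ.le hcd hCsmall.le
      (hreg x (hcenter x hx) _ (hrad x (hu hx)).1.1) (hrad x (hu hx)) (hmax x (hu hx)))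
    (hudisj.mono fun _ => inter_subset_right)
    (fun _ _ => measurableSet_ball.inter measurableSet_ball)
    (iUnion₂_subset fun x hx => ?_)
  · refine ae_le_set.2 (measure_mono_null ?_ hCG)
    refine fun x hx => ⟨hx.1, fun hxG => hx.2 ?_⟩
    obtain ⟨y, hy, hxy⟩ := mem_iUnion₂.1 (hcover ⟨hx.1, hxG⟩)
    exact mem_biUnion hy ⟨hx.1, hxy⟩
  · obtain ⟨⟨hr, hrR⟩, hdens⟩ := hrad x (hu hx)
    exact inter_comm _ _ ▸ hprop x (hcenter x hx) _ hr hrR hdens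

/-- Lemma 5.3: a "crawling of ink spots"-type lemma in an Ahlfors regular
metric measure space, relative to a `d`-regular ball `B_R(xbar)`. -/
theorem ink_spots {X : Type*} [MetricSpace X] [MeasurableSpace X] [BorelSpace X]
    (μ : Measure X) (ω Q : ℝ) (hω : 0 < ω) (hQ : 0 < Q)
    (hAhlfors : ∀ (x : X) (r : ℝ), 0 < r →
      μ (ball x r) = ENNReal.ofReal (ω * r ^ Q))
    (xbar : X) (R : ℝ) (hRpos : 0 < R) (c_d : ℝ) (hcd : 0 < c_d)
    (hreg : ∀ (x : X), x ∈ ball xbar R → ∀ r : ℝ, 0 < r →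
      ENNReal.ofReal c_d * μ (ball x r) ≤ μ (ball xbar R ∩ ball x r))
    (ε : ℝ) (hε0 : 0 < ε) (hε1 : ε < 1)
    (C D : Set X) (hCmes : MeasurableSet C) (hDmes : MeasurableSet D)
    (hCD : C ⊆ D) (hDB : D ⊆ ball xbar R)
    (hCsmall : μ C < ENNReal.ofReal ε * μ (ball xbar R))
    (hprop : ∀ x ∈ ball xbar R, ∀ r : ℝ, 0 < r → r ≤ 2 * R →
      ENNReal.ofReal ε * μ (ball x r) ≤ μ (C ∩ ball x r) →
      ball x r ∩ ball xbar R ⊆ D) :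
    μ C ≤ ENNReal.ofReal (ε * 5 ^ Q / c_d) * μ D :=
  ink_spots_general μ ω Q hω hQ hAhlfors xbar R hRpos c_d hcd hreg ε hε1 C D hCD hDB hCsmall hprop
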